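/- Characterization of periodic collision invariants: let φ be a smooth 2L-periodic function on ℝ^d (d ≥ 2) such that φ(v') + φ(v'_*) − φ(v) − φ(v_*) = 0 for all v, v_* ∈ ℝ^d and all σ ∈ S^{d-1}, where v' = (v+v_*)/2 + |v−v_*|σ/2 and v'_* = (v+v_*)/2 − |v−v_*|σ/2. Then φ is constant. -/

import Mathlib

noncomputable section
open Metric Real RealInnerProductSpace

abbrev Vec (d : ℕ) : Type := EuclideanSpace ℝ (Fin d)

namespace CollInvAux

variable {d : ℕ} {L : ℝ} {φ : Vec d → ℝ}

/-- Key consequence of collision invariance: `φ(m+w)+φ(m−w)` depends only on `‖w‖`. -/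
lemma keyA
    (hinv : ∀ (v vs σ : Vec d), ‖σ‖ = 1 →
      φ ((2:ℝ)⁻¹ • (v + vs) + ((2:ℝ)⁻¹ * ‖v - vs‖) • σ) +
        φ ((2:ℝ)⁻¹ • (v + vs) - ((2:ℝ)⁻¹ * ‖v - vs‖) • σ) -
        φ v - φ vs = 0)
    (m w w' : Vec d) (h : ‖w‖ = ‖w'‖) :
    φ (m + w') + φ (m - w') = φ (m + w) + φ (m - w) := by
  rcases eq_or_ne w 0 with rfl | hw
  · have hw' : w' = 0 := by
      rw [norm_zero] at h; exact (norm_eq_zero.mp h.symm)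
    simp [hw']
  · have hwn : ‖w‖ ≠ 0 := norm_ne_zero_iff.mpr hw
    have hσ : ‖(‖w‖⁻¹) • w'‖ = 1 := by
      rw [norm_smul, norm_inv, norm_norm, ← h]
      field_simp
    have H := hinv (m + w) (m - w) ((‖w‖⁻¹) • w') hσ
    have h1 : (2:ℝ)⁻¹ • ((m + w) + (m - w)) = m := by
      have : (m + w) + (m - w) = (2:ℝ) • m := by module
      rw [this, smul_smul]; norm_num
    have h2 : (m + w) - (m - w) = (2:ℝ) • w := by module
    have h3 : ((2:ℝ)⁻¹ * ‖(m + w) - (m - w)‖) • ((‖w‖⁻¹) • w') = w' := by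
      rw [h2, norm_smul, smul_smul]
      have : (2:ℝ)⁻¹ * (‖(2:ℝ)‖ * ‖w‖) * ‖w‖⁻¹ = 1 := by
        rw [Real.norm_ofNat]; field_simp
      rw [this, one_smul]
    rw [h1, h3] at H
    linarith

end CollInvAux

set_option maxHeartbeats 1000000 in
/-- **Characterization of periodic collision invariants**: a smooth
`2L`-periodic function `φ` on `ℝ^d` (`d ≥ 2`) satisfying
`φ(v') + φ(v'_*) − φ(v) − φ(v_*) = 0` for all `v, v_*` and all unit vectors
`σ`, with `v' = (v+v_*)/2 + |v−v_*|σ/2` and `v'_* = (v+v_*)/2 − |v−v_*|σ/2`,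
is constant. -/
theorem periodic_collision_invariant_is_constant
    (d : ℕ) (hd : 2 ≤ d) (L : ℝ) (hL : 0 < L)
    (φ : Vec d → ℝ) (hsmooth : ContDiff ℝ (⊤ : ℕ∞) φ)
    (hper : ∀ (v : Vec d) (i : Fin d),
      φ (v + (2 * L) • (EuclideanSpace.single i (1:ℝ))) = φ v)
    (hinv : ∀ (v vs σ : Vec d), ‖σ‖ = 1 →
      φ ((2:ℝ)⁻¹ • (v + vs) + ((2:ℝ)⁻¹ * ‖v - vs‖) • σ) +
        φ ((2:ℝ)⁻¹ • (v + vs) - ((2:ℝ)⁻¹ * ‖v - vs‖) • σ) -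
        φ v - φ vs = 0) :
    ∃ c : ℝ, ∀ v, φ v = c := by
  have hL2 : (0:ℝ) < 2 * L := by linarith
  have i0 : Fin d := ⟨0, by omega⟩
  -- Step B: pointwise midpoint property on spheres of radius 2L
  have hB : ∀ (m w : Vec d), ‖w‖ = 2 * L →
      φ (m + w) + φ (m - w) = 2 * φ m := by
    intro m w hw
    have he : ‖(2 * L) • (EuclideanSpace.single i0 (1:ℝ))‖ = 2 * L := by
      rw [norm_smul, EuclideanSpace.norm_single, norm_one, mul_one,
        Real.norm_eq_abs, abs_of_pos hL2]
    have := CollInvAux.keyA hinv m ((2 * L) • (EuclideanSpace.single i0 (1:ℝ))) w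
      (by rw [he, hw])
    rw [hper m i0] at this
    have hm : φ (m - (2 * L) • (EuclideanSpace.single i0 (1:ℝ))) = φ m := by
      have := hper (m - (2 * L) • (EuclideanSpace.single i0 (1:ℝ))) i0
      rw [sub_add_cancel] at this
      exact this.symm
    rw [hm] at this
    linarith
  -- integer-shift periodicity
  have hshift : ∀ (v : Vec d) (i : Fin d) (n : ℤ),
      φ (v + ((2 * L) * n) • (EuclideanSpace.single i (1:ℝ))) = φ v := by
    intro v i n
    induction n using Int.induction_on with
    | zero => simp
    | succ n ih =>
      have : v + ((2 * L) * ((n : ℤ) + 1 : ℤ)) • (EuclideanSpace.single i (1:ℝ)) =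
          (v + ((2 * L) * (n : ℤ)) • (EuclideanSpace.single i (1:ℝ)))
            + (2 * L) • (EuclideanSpace.single i (1:ℝ)) := by
        push_cast
        module
      rw [this, hper, ih]
    | pred n ih =>
      have : v + ((2 * L) * (-(n : ℤ) : ℤ)) • (EuclideanSpace.single i (1:ℝ)) =
          (v + ((2 * L) * (-(n : ℤ) - 1 : ℤ)) • (EuclideanSpace.single i (1:ℝ)))
            + (2 * L) • (EuclideanSpace.single i (1:ℝ)) := by
        push_cast
        module
      rw [← ih, ← hper (v + ((2 * L) * (-(n : ℤ) - 1 : ℤ)) • (EuclideanSpace.single i (1:ℝ))) i,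
        this]
  -- multi-shift
  have hshiftSum : ∀ (k : Fin d → ℤ) (v : Vec d),
      φ (v + ∑ i, ((2 * L) * k i) • (EuclideanSpace.single i (1:ℝ))) = φ v := by
    intro k v
    have : ∀ s : Finset (Fin d), ∀ v : Vec d,
        φ (v + ∑ i ∈ s, ((2 * L) * k i) • (EuclideanSpace.single i (1:ℝ))) = φ v := by
      intro s
      induction s using Finset.induction_on with
      | empty => intro v; simp
      | insert j s hj ih =>
        intro v
        rw [Finset.sum_insert hj]
        have : v + (((2 * L) * k j) • (EuclideanSpace.single j (1:ℝ))
            + ∑ i ∈ s, ((2 * L) * k i) • (EuclideanSpace.single i (1:ℝ))) =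
            (v + ((2 * L) * k j) • (EuclideanSpace.single j (1:ℝ)))
            + ∑ i ∈ s, ((2 * L) * k i) • (EuclideanSpace.single i (1:ℝ)) := by
          module
        rw [this, ih, hshift]
    exact this Finset.univ v
  -- boundedness of φ
  obtain ⟨M, hM⟩ : ∃ M : ℝ, ∀ v : Vec d, |φ v| ≤ M := by
    obtain ⟨M, hM⟩ := (isCompact_closedBall (0 : Vec d) (2 * L * d)).exists_bound_of_continuousOn
      hsmooth.continuous.continuousOn
    refine ⟨M, fun v => ?_⟩
    set k : Fin d → ℤ := fun i => -⌊v i / (2 * L)⌋ with hk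
    set w : Vec d := v + ∑ i, ((2 * L) * k i) • (EuclideanSpace.single i (1:ℝ)) with hwdef
    have hwv : φ w = φ v := hshiftSum k v
    have hwcoord : ∀ i, w i = 2 * L * Int.fract (v i / (2 * L)) := by
      intro i
      have hwi : w i = v i
          + ∑ j, (((2 * L) * (k j : ℝ)) • (EuclideanSpace.single j (1:ℝ))) i := by
        rw [hwdef, PiLp.add_apply]
        congr 1
        rw [WithLp.ofLp_sum]
        exact Finset.sum_apply i Finset.univ _
      rw [hwi]
      have hsum : ∑ j, (((2 * L) * (k j : ℝ)) • (EuclideanSpace.single j (1:ℝ))) i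
          = (2 * L) * k i := by
        rw [Finset.sum_eq_single i]
        · simp [EuclideanSpace.single_apply]
        · intro b _ hb
          rw [PiLp.smul_apply, EuclideanSpace.single_apply, if_neg (Ne.symm hb), smul_zero]
        · simp
      rw [hsum, hk, Int.fract]
      have h2L : (2 * L) ≠ 0 := ne_of_gt hL2
      push_cast
      field_simp
      ring
    have hwnorm : ‖w‖ ≤ 2 * L * d := by
      have h1 : ∀ i, |w i| ≤ 2 * L := by
        intro i
        rw [hwcoord i,
          abs_of_nonneg (mul_nonneg (le_of_lt hL2) (Int.fract_nonneg (v i / (2 * L))))]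
        nlinarith [Int.fract_lt_one (v i / (2 * L)), Int.fract_nonneg (v i / (2 * L))]
      rw [EuclideanSpace.norm_eq]
      have h2 : ∑ i, ‖w i‖ ^ 2 ≤ (d : ℝ) * (2 * L) ^ 2 := by
        calc ∑ i : Fin d, ‖w i‖ ^ 2 ≤ ∑ i : Fin d, (2 * L) ^ 2 := by
              apply Finset.sum_le_sum
              intro i _
              have := h1 i
              rw [Real.norm_eq_abs]
              nlinarith [abs_nonneg (w i)]
          _ = (d : ℝ) * (2 * L) ^ 2 := by rw [Finset.sum_const, Finset.card_univ, Fintype.card_fin, nsmul_eq_mul]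
      calc Real.sqrt (∑ i, ‖w i‖ ^ 2) ≤ Real.sqrt ((d : ℝ) * (2 * L) ^ 2) :=
            Real.sqrt_le_sqrt h2
        _ ≤ 2 * L * d := by
            rw [show (d : ℝ) * (2 * L) ^ 2 = (2 * L) ^ 2 * d by ring]
            rw [Real.sqrt_mul (by positivity), Real.sqrt_sq (by positivity)]
            have hd1 : (1 : ℝ) ≤ (d : ℝ) := by
              exact_mod_cast Nat.one_le_iff_ne_zero.mpr (by omega)
            have : Real.sqrt d ≤ d := by
              nlinarith [Real.sq_sqrt (show (0:ℝ) ≤ d by positivity),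
                Real.sqrt_nonneg (d : ℝ)]
            nlinarith
    rw [← hwv]
    have := hM w (by simpa [Metric.mem_closedBall, dist_zero_right] using hwnorm)
    simpa [Real.norm_eq_abs] using this
  -- Step: translation invariance by any vector of norm 2L
  have hstep : ∀ (m w : Vec d), ‖w‖ = 2 * L → φ (m + w) = φ m := by
    intro m w hw
    -- arithmetic progression
    have hAP : ∀ n : ℕ, φ (m + (n : ℝ) • w) = φ m + n * (φ (m + w) - φ m) := by
      intro n
      induction n using Nat.strong_induction_on with
      | _ n ih =>
        match n with
        | 0 => simp
        | 1 => simp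
        | (n + 2) =>
          have hB' := hB (m + ((n : ℝ) + 1) • w) w hw
          have e1 : (m + ((n : ℝ) + 1) • w) + w = m + ((n + 2 : ℕ) : ℝ) • w := by
            push_cast; module
          have e2 : (m + ((n : ℝ) + 1) • w) - w = m + ((n : ℕ) : ℝ) • w := by
            push_cast; module
          have e3 : m + ((n : ℝ) + 1) • w = m + ((n + 1 : ℕ) : ℝ) • w := by
            push_cast; module
          rw [e1, e2, e3] at hB'
          rw [ih n (by omega), ih (n + 1) (by omega)] at hB'
          push_cast at hB' ⊢
          linarith
    -- boundedness kills the linear growth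
    by_contra hne
    have hδ : φ (m + w) - φ m ≠ 0 := fun h => hne (by linarith [sub_eq_zero.mp h])
    obtain ⟨n, hn⟩ := exists_nat_gt ((2 * M) / |φ (m + w) - φ m|)
    have h1 : |φ (m + (n : ℝ) • w)| ≤ M := hM _
    have h2 : |φ m| ≤ M := hM m
    have h3 : (n : ℝ) * |φ (m + w) - φ m| ≤ 2 * M := by
      have := hAP n
      calc (n : ℝ) * |φ (m + w) - φ m| = |(n : ℝ) * (φ (m + w) - φ m)| := by
            rw [abs_mul, Nat.abs_cast]
        _ = |φ (m + (n : ℝ) • w) - φ m| := by rw [this]; ring_nf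
        _ ≤ |φ (m + (n : ℝ) • w)| + |φ m| := abs_sub _ _
        _ ≤ 2 * M := by linarith
    have h4 : (2 * M) / |φ (m + w) - φ m| < n := hn
    have habs : 0 < |φ (m + w) - φ m| := abs_pos.mpr hδ
    rw [div_lt_iff₀ habs] at h4
    linarith
  -- two-step: translation invariance by any vector of norm ≤ 4L
  have htwo : ∀ (m w : Vec d), ‖w‖ ≤ 4 * L → φ (m + w) = φ m := by
    intro m w hw
    -- find unit vector orthogonal to w
    obtain ⟨e, he1, he2⟩ : ∃ e : Vec d, ‖e‖ = 1 ∧ ⟪w, e⟫ = 0 := by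
      have hK : ((ℝ ∙ w)ᗮ : Submodule ℝ (Vec d)) ≠ ⊥ := by
        intro hbot
        have h1 : Module.finrank ℝ (ℝ ∙ w) + Module.finrank ℝ ((ℝ ∙ w)ᗮ) =
            Module.finrank ℝ (Vec d) := (ℝ ∙ w).finrank_add_finrank_orthogonal
        rw [hbot, finrank_bot, finrank_euclideanSpace_fin] at h1
        have h2 : Module.finrank ℝ (ℝ ∙ w) ≤ 1 := by
          rcases eq_or_ne w 0 with rfl | hw0
          · rw [Submodule.span_zero_singleton, finrank_bot]
            omega
          · rw [finrank_span_singleton hw0]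
        omega
      obtain ⟨x, hx, hx0⟩ := Submodule.exists_mem_ne_zero_of_ne_bot hK
      refine ⟨‖x‖⁻¹ • x, ?_, ?_⟩
      · rw [norm_smul, norm_inv, norm_norm]
        exact inv_mul_cancel₀ (norm_ne_zero_iff.mpr hx0)
      · rw [real_inner_smul_right]
        have : ⟪w, x⟫ = 0 := by
          have := (Submodule.mem_orthogonal (ℝ ∙ w) x).mp hx w
            (Submodule.mem_span_singleton_self w)
          exact this
        rw [this]
        exact mul_zero _
    set h : ℝ := Real.sqrt ((2 * L) ^ 2 - ‖w‖ ^ 2 / 4) with hh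
    have hw4 : ‖w‖ ^ 2 / 4 ≤ (2 * L) ^ 2 := by nlinarith [norm_nonneg w]
    have hh2 : h ^ 2 = (2 * L) ^ 2 - ‖w‖ ^ 2 / 4 := Real.sq_sqrt (by linarith)
    set z : Vec d := (2:ℝ)⁻¹ • w + h • e with hz
    have hinner : ⟪(2:ℝ)⁻¹ • w, h • e⟫ = 0 := by
      rw [real_inner_smul_left, real_inner_smul_right, he2]; ring
    have hna : ‖(2:ℝ)⁻¹ • w‖ ^ 2 = ‖w‖ ^ 2 / 4 := by
      rw [norm_smul, norm_inv, Real.norm_ofNat, mul_pow]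
      ring
    have hnb : ‖h • e‖ ^ 2 = (2 * L) ^ 2 - ‖w‖ ^ 2 / 4 := by
      rw [norm_smul, he1, mul_one, Real.norm_eq_abs, sq_abs, hh2]
    have hnz : ‖z‖ = 2 * L := by
      have hzn : ‖z‖ ^ 2 = (2 * L) ^ 2 := by
        rw [hz, norm_add_sq_real, hinner, hna, hnb]
        ring
      have h1 : Real.sqrt (‖z‖ ^ 2) = Real.sqrt ((2 * L) ^ 2) := by rw [hzn]
      rwa [Real.sqrt_sq (norm_nonneg z), Real.sqrt_sq (by linarith)] at h1
    have hnwz : ‖w - z‖ = 2 * L := by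
      have hwz : w - z = (2:ℝ)⁻¹ • w - h • e := by rw [hz]; module
      have hzn : ‖w - z‖ ^ 2 = (2 * L) ^ 2 := by
        rw [hwz, norm_sub_sq_real, hinner, hna, hnb]
        ring
      have h1 : Real.sqrt (‖w - z‖ ^ 2) = Real.sqrt ((2 * L) ^ 2) := by rw [hzn]
      rwa [Real.sqrt_sq (norm_nonneg _), Real.sqrt_sq (by linarith)] at h1
    have e1 : m + w = (m + z) + (w - z) := by module
    rw [e1, hstep (m + z) (w - z) hnwz, hstep m z hnz]
  -- chain: all values equal
  have hall : ∀ n : ℕ, ∀ (m w : Vec d), ‖w‖ ≤ 4 * L * n → φ (m + w) = φ m := by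
    intro n
    induction n with
    | zero =>
      intro m w hw
      have : w = 0 := by
        have : ‖w‖ ≤ 0 := by simpa using hw
        exact norm_eq_zero.mp (le_antisymm this (norm_nonneg w))
      simp [this]
    | succ n ih =>
      intro m w hw
      rcases le_or_gt ‖w‖ (4 * L) with h | h
      · exact htwo m w h
      · have hwne : ‖w‖ ≠ 0 := ne_of_gt (lt_trans (by linarith : (0:ℝ) < 4 * L) h)
        set w1 : Vec d := ((4 * L) / ‖w‖) • w with hw1
        have hnw1 : ‖w1‖ = 4 * L := by
          rw [hw1, norm_smul, Real.norm_eq_abs, abs_of_pos (by positivity)]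
          field_simp
        have hnw2 : ‖w - w1‖ ≤ 4 * L * n := by
          have : w - w1 = (1 - (4 * L) / ‖w‖) • w := by rw [hw1]; module
          rw [this, norm_smul, Real.norm_eq_abs]
          have hpos : 0 < ‖w‖ := lt_of_le_of_ne (norm_nonneg w) (Ne.symm hwne)
          have hle : (4 * L) / ‖w‖ ≤ 1 := by
            rw [div_le_one hpos]; linarith
          rw [abs_of_nonneg (by linarith)]
          have : (1 - 4 * L / ‖w‖) * ‖w‖ = ‖w‖ - 4 * L := by field_simp
          rw [this]
          push_cast at hw ⊢
          linarith
        have e1 : m + w = (m + w1) + (w - w1) := by module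
        rw [e1, ih (m + w1) (w - w1) hnw2, htwo m w1 (le_of_eq hnw1)]
  refine ⟨φ 0, fun v => ?_⟩
  obtain ⟨n, hn⟩ := exists_nat_gt (‖v‖ / (4 * L))
  have hn' : ‖v‖ ≤ 4 * L * n := by
    rw [div_lt_iff₀ (by linarith)] at hn
    linarith
  have := hall n 0 v (by simpa using hn')
  simpa using this
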